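/- arXiv:2407.04107 — 4 statements merged into one kernel-verified Lean document; each statement's English description precedes it below -/
import Mathlib

section
/- Let n ≥ 1 and let N be a real number. There exists a constant C > 0, depending only on n (one may take C = 2^{n+1}), such that for all integers j, j' with j ≥ j', all x ∈ ℝⁿ, and all k, k' ∈ ℤⁿ: (1 + ‖2^{j'}·x − k'‖)^{−(n+1)} · (1 + ‖2^{j}·x − k‖)^{−(N+n+1)} ≤ C · (1 + ‖2^{j'−j}·k − k'‖)^{−(n+1)} · (1 + ‖2^{j}·x − k‖)^{−N}. -/
/-- A point of `ℤⁿ` regarded as a point of Euclidean space `ℝⁿ`. -/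
noncomputable def intPt (n : ℕ) (k : Fin n → ℤ) : EuclideanSpace ℝ (Fin n) :=
  (WithLp.equiv 2 (Fin n → ℝ)).symm (fun i => (k i : ℝ))

/-- Lemma 2.5: for `j ≥ j'`,
`(1+‖2^{j'}x-k'‖)^{-(n+1)} (1+‖2^{j}x-k‖)^{-(N+n+1)}
  ≤ C (1+‖2^{j'-j}k-k'‖)^{-(n+1)} (1+‖2^{j}x-k‖)^{-N}`,
with `C = 2^{n+1}` depending only on `n`. -/
theorem weight_exchange (n : ℕ) (hn : 1 ≤ n) (N : ℝ) :
    ∃ C : ℝ, 0 < C ∧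
      ∀ (j j' : ℤ), j' ≤ j →
        ∀ (x : EuclideanSpace ℝ (Fin n)) (k k' : Fin n → ℤ),
          (1 + ‖(2 : ℝ) ^ j' • x - intPt n k'‖) ^ (-((n : ℝ) + 1)) *
              (1 + ‖(2 : ℝ) ^ j • x - intPt n k‖) ^ (-(N + (n : ℝ) + 1)) ≤
            C * (1 + ‖(2 : ℝ) ^ (j' - j) • intPt n k - intPt n k'‖) ^ (-((n : ℝ) + 1)) *
              (1 + ‖(2 : ℝ) ^ j • x - intPt n k‖) ^ (-N) := by
  refine ⟨1, one_pos, fun j j' hjj x k k' => ?_⟩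
  set a := ‖(2 : ℝ) ^ j' • x - intPt n k'‖ with ha
  set b := ‖(2 : ℝ) ^ j • x - intPt n k‖ with hb
  set d := ‖(2 : ℝ) ^ (j' - j) • intPt n k - intPt n k'‖ with hd
  have ha0 : 0 ≤ a := norm_nonneg _
  have hb0 : 0 ≤ b := norm_nonneg _
  have hd0 : 0 ≤ d := norm_nonneg _
  -- vector identity
  have hvec : (2 : ℝ) ^ (j' - j) • intPt n k - intPt n k'
      = ((2 : ℝ) ^ j' • x - intPt n k') - (2 : ℝ) ^ (j' - j) • ((2 : ℝ) ^ j • x - intPt n k) := by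
    rw [smul_sub, smul_smul, ← zpow_add₀ (two_ne_zero), sub_add_cancel]
    abel
  have hpow_le : (2 : ℝ) ^ (j' - j) ≤ 1 :=
    zpow_le_one_of_nonpos₀ (by norm_num) (by omega)
  have hpow_pos : (0 : ℝ) < (2 : ℝ) ^ (j' - j) := by positivity
  have hdab : d ≤ a + b := by
    rw [hd, hvec]
    refine le_trans (norm_sub_le _ _) ?_
    have : ‖(2 : ℝ) ^ (j' - j) • ((2 : ℝ) ^ j • x - intPt n k)‖ ≤ b := by
      rw [norm_smul, Real.norm_eq_abs, abs_of_pos hpow_pos]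
      calc (2 : ℝ) ^ (j' - j) * b ≤ 1 * b := by
            exact mul_le_mul_of_nonneg_right hpow_le hb0
        _ = b := one_mul b
    linarith
  have hA : (0 : ℝ) < 1 + a := by linarith
  have hB : (0 : ℝ) < 1 + b := by linarith
  have hD : (0 : ℝ) < 1 + d := by linarith
  have hprod : 1 + d ≤ (1 + a) * (1 + b) := by nlinarith
  have key : ((1 + a) * (1 + b)) ^ (-((n : ℝ) + 1)) ≤ (1 + d) ^ (-((n : ℝ) + 1)) := by
    apply Real.rpow_le_rpow_of_nonpos hD hprod
    have : (0 : ℝ) ≤ (n : ℝ) + 1 := by positivity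
    linarith
  have hsplit : (1 + b) ^ (-(N + (n : ℝ) + 1))
      = (1 + b) ^ (-((n : ℝ) + 1)) * (1 + b) ^ (-N) := by
    rw [← Real.rpow_add hB]; ring_nf
  rw [hsplit, one_mul, ← mul_assoc]
  refine mul_le_mul_of_nonneg_right ?_ (Real.rpow_nonneg hB.le _)
  calc (1 + a) ^ (-((n : ℝ) + 1)) * (1 + b) ^ (-((n : ℝ) + 1))
      = ((1 + a) * (1 + b)) ^ (-((n : ℝ) + 1)) := (Real.mul_rpow hA.le hB.le).symm
    _ ≤ (1 + d) ^ (-((n : ℝ) + 1)) := key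
end

section
/- Let n ≥ 1 and let N be a real number with N > 2n + 1. There exists a constant C > 0, depending only on n and N, such that the following holds. For every family of nonnegative coefficients c : ℤⁿ → [0,∞), define f_{j'} : ℝⁿ → [0,∞] by f_{j'}(x) = Σ_{k'∈ℤⁿ} c(k')·1_{[0,1)ⁿ}(2^{j'}·x − k'). Then for all integers j, j' with j ≥ j', every k ∈ ℤⁿ, and every x ∈ ℝⁿ with 2^{j}·x − k ∈ [0,1)ⁿ, one has Σ_{k'∈ℤⁿ} c(k')·(1 + ‖k' − 2^{j'−j}·k‖)^{−N} ≤ C · M f_{j'}(x). -/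
/-!
Sort the `k'` dyadically by the size of `1 + ‖k' - 2^(j'-j) k‖ ∈ [2^m, 2^(m+1))`. Every cube
`2^(-j') (k' + [0,1)ⁿ)` of the `m`-th group lies in the ball around `x` of radius
`(2^(m+1) + 2√n) 2^(-j')`, so averaging `f_{j'}` over that ball bounds the total coefficient of the
group by `(2^(m+1) + 2√n)ⁿ |B(0,1)| · M f_{j'}(x)`. Weighting the groups by `2^(-mN)` leaves a
geometric series of ratio `2^(n-N) < 1`.
-/

open MeasureTheory ENNReal

/-- The unit cube `[0,1)ⁿ` in `ℝⁿ`. -/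
def unitCube (n : ℕ) : Set (EuclideanSpace ℝ (Fin n)) :=
  {y | ∀ i, 0 ≤ y i ∧ y i < 1}

/-- The Hardy–Littlewood maximal function of `g : ℝⁿ → [0,∞]`. -/
noncomputable def maxFn (n : ℕ) (g : EuclideanSpace ℝ (Fin n) → ℝ≥0∞)
    (x : EuclideanSpace ℝ (Fin n)) : ℝ≥0∞ :=
  ⨆ (r : ℝ) (_ : 0 < r), (∫⁻ y in Metric.ball x r, g y) / volume (Metric.ball x r)

/-- The function `f_{j'}(x) = ∑_{k'} c(k') 1_{[0,1)ⁿ}(2^{j'} x - k')`. -/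
noncomputable def waveletSum (n : ℕ) (c : (Fin n → ℤ) → NNReal) (j' : ℤ)
    (x : EuclideanSpace ℝ (Fin n)) : ℝ≥0∞ :=
  ∑' k' : Fin n → ℤ,
    (c k' : ℝ≥0∞) * (unitCube n).indicator 1 ((2 : ℝ) ^ j' • x - intPt n k')

open Metric

section

variable {n : ℕ}

lemma norm_le_sqrt_of_mem_unitCube {z : EuclideanSpace ℝ (Fin n)} (hz : z ∈ unitCube n) :
    ‖z‖ ≤ √n := by
  rw [EuclideanSpace.norm_eq]
  gcongr
  calc ∑ i, ‖z i‖ ^ 2 ≤ ∑ _i : Fin n, (1 : ℝ) :=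
        Finset.sum_le_sum fun i _ => by rw [Real.norm_eq_abs, sq_abs]; nlinarith [hz i]
    _ = n := by simp

variable (n) in
def dyadicCube (j : ℤ) (k : Fin n → ℤ) : Set (EuclideanSpace ℝ (Fin n)) :=
  {y | (2 : ℝ) ^ j • y - intPt n k ∈ unitCube n}

lemma dyadicCube_eq_preimage (j : ℤ) (k : Fin n → ℤ) :
    dyadicCube n j k = (MeasurableEquiv.toLp 2 (Fin n → ℝ)).symm ⁻¹'
      Set.univ.pi fun i => Set.Ico (k i / 2 ^ j) ((k i + 1) / 2 ^ j) := by
  ext y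
  have hp : (0 : ℝ) < 2 ^ j := zpow_pos two_pos j
  simp only [Set.mem_preimage, Set.mem_univ_pi, Set.mem_Ico, div_le_iff₀ hp, lt_div_iff₀ hp]
  refine forall_congr' fun i => ?_
  change 0 ≤ 2 ^ j * y i - k i ∧ 2 ^ j * y i - k i < 1 ↔ k i ≤ y i * 2 ^ j ∧ y i * 2 ^ j < k i + 1
  constructor <;> rintro ⟨h₁, h₂⟩ <;> constructor <;> linarith

lemma measurableSet_dyadicCube (j : ℤ) (k : Fin n → ℤ) : MeasurableSet (dyadicCube n j k) := by
  rw [dyadicCube_eq_preimage]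
  exact (MeasurableEquiv.toLp 2 _).symm.measurable (.univ_pi fun _ => measurableSet_Ico)

lemma volume_dyadicCube (j : ℤ) (k : Fin n → ℤ) :
    volume (dyadicCube n j k) = ENNReal.ofReal (((2 : ℝ) ^ j)⁻¹ ^ n) := by
  rw [dyadicCube_eq_preimage, (EuclideanSpace.volume_preserving_symm_measurableEquiv_toLp
    (Fin n)).measure_preimage (MeasurableSet.univ_pi fun _ => measurableSet_Ico).nullMeasurableSet,
    volume_pi_pi]
  simp_rw [Real.volume_Ico, ← sub_div, add_sub_cancel_left, one_div]
  rw [Finset.prod_const, Finset.card_univ, Fintype.card_fin, ENNReal.ofReal_pow (by positivity)]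

lemma waveletSum_eq_tsum_indicator (c : (Fin n → ℤ) → NNReal) (j : ℤ)
    (y : EuclideanSpace ℝ (Fin n)) :
    waveletSum n c j y = ∑' k, (dyadicCube n j k).indicator (fun _ => (c k : ℝ≥0∞)) y := by
  refine tsum_congr fun k => ?_
  by_cases h : y ∈ dyadicCube n j k
  · rw [Set.indicator_of_mem h, Set.indicator_of_mem (show _ ∈ unitCube n from h)]; simp
  · rw [Set.indicator_of_notMem h, Set.indicator_of_notMem (show _ ∉ unitCube n from h)]; simp

lemma setLIntegral_waveletSum (c : (Fin n → ℤ) → NNReal) (j : ℤ)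
    {s : Set (EuclideanSpace ℝ (Fin n))} :
    ∫⁻ y in s, waveletSum n c j y = ∑' k, (c k : ℝ≥0∞) * volume (dyadicCube n j k ∩ s) := by
  simp_rw [waveletSum_eq_tsum_indicator]
  rw [lintegral_tsum fun k =>
    (measurable_const.indicator (measurableSet_dyadicCube j k)).aemeasurable]
  refine tsum_congr fun k => ?_
  rw [lintegral_indicator (measurableSet_dyadicCube j k), setLIntegral_const,
    Measure.restrict_apply (measurableSet_dyadicCube j k)]

lemma setLIntegral_ball_le_maxFn_mul_volume (g : EuclideanSpace ℝ (Fin n) → ℝ≥0∞)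
    (x : EuclideanSpace ℝ (Fin n)) {r : ℝ} (hr : 0 < r) :
    ∫⁻ y in ball x r, g y ≤ maxFn n g x * volume (ball x r) :=
  (ENNReal.div_le_iff (measure_ball_pos _ _ hr).ne' measure_ball_lt_top.ne).mp <|
    le_iSup₂ (f := fun r (_ : 0 < r) => (∫⁻ y in ball x r, g y) / volume (ball x r)) r hr

lemma norm_zpow_smul_sub_le_sqrt {j j' : ℤ} (hj : j' ≤ j) {k : Fin n → ℤ}
    {x : EuclideanSpace ℝ (Fin n)} (hx : (2 : ℝ) ^ j • x - intPt n k ∈ unitCube n) :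
    ‖(2 : ℝ) ^ (j' - j) • intPt n k - (2 : ℝ) ^ j' • x‖ ≤ √n := by
  have hscale : (2 : ℝ) ^ (j' - j) ≤ 1 := zpow_le_one_of_nonpos₀ one_le_two (by omega)
  have hsplit : (2 : ℝ) ^ (j' - j) • intPt n k - (2 : ℝ) ^ j' • x
      = -((2 : ℝ) ^ (j' - j) • ((2 : ℝ) ^ j • x - intPt n k)) := by
    rw [smul_sub, smul_smul, ← zpow_add₀ two_ne_zero, sub_add_cancel, neg_sub]
  rw [hsplit, norm_neg, norm_smul, Real.norm_of_nonneg (by positivity)]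
  calc (2 : ℝ) ^ (j' - j) * ‖(2 : ℝ) ^ j • x - intPt n k‖ ≤ 1 * √n :=
        mul_le_mul hscale (norm_le_sqrt_of_mem_unitCube hx) (norm_nonneg _) zero_le_one
    _ = √n := one_mul _

lemma dyadicCube_subset_ball {j j' : ℤ} (hj : j' ≤ j) {k k' : Fin n → ℤ}
    {x : EuclideanSpace ℝ (Fin n)} (hx : (2 : ℝ) ^ j • x - intPt n k ∈ unitCube n) {R : ℝ}
    (hk' : ‖intPt n k' - (2 : ℝ) ^ (j' - j) • intPt n k‖ < R) :
    dyadicCube n j' k' ⊆ ball x ((R + 2 * √n) / 2 ^ j') := by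
  intro y hy
  have hp : (0 : ℝ) < 2 ^ j' := zpow_pos two_pos j'
  have hsplit : (2 : ℝ) ^ j' • (y - x) = ((2 : ℝ) ^ j' • y - intPt n k')
      + (intPt n k' - (2 : ℝ) ^ (j' - j) • intPt n k)
      + ((2 : ℝ) ^ (j' - j) • intPt n k - (2 : ℝ) ^ j' • x) := by
    rw [smul_sub]; abel
  have hnorm : (2 : ℝ) ^ j' * ‖y - x‖ < √n + R + √n := by
    rw [← Real.norm_of_nonneg hp.le, ← norm_smul, hsplit]
    exact norm_add₃_le.trans_lt <| add_lt_add_of_lt_of_le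
      (add_lt_add_of_le_of_lt (norm_le_sqrt_of_mem_unitCube hy) hk')
      (norm_zpow_smul_sub_le_sqrt hj hx)
  rw [mem_ball, dist_eq_norm, lt_div_iff₀ hp]
  linarith

lemma volume_ball_div_zpow (x : EuclideanSpace ℝ (Fin n)) {t : ℝ} (ht : 0 < t) (j : ℤ) :
    volume (ball x (t / 2 ^ j)) = ENNReal.ofReal (t ^ n) * ENNReal.ofReal (((2 : ℝ) ^ j)⁻¹ ^ n)
      * volume (ball (0 : EuclideanSpace ℝ (Fin n)) 1) := by
  rw [Measure.addHaar_ball_of_pos _ _ (by positivity), finrank_euclideanSpace_fin,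
    ← ENNReal.ofReal_mul (by positivity), div_eq_mul_inv, mul_pow]

lemma tsum_coeff_le_maxFn {j j' : ℤ} (hj : j' ≤ j) {k : Fin n → ℤ}
    {x : EuclideanSpace ℝ (Fin n)} (hx : (2 : ℝ) ^ j • x - intPt n k ∈ unitCube n)
    (c : (Fin n → ℤ) → NNReal) {R : ℝ} (hR : 0 < R) :
    ∑' k', (if ‖intPt n k' - (2 : ℝ) ^ (j' - j) • intPt n k‖ < R then (c k' : ℝ≥0∞) else 0)
      ≤ ENNReal.ofReal ((R + 2 * √n) ^ n) * volume (ball (0 : EuclideanSpace ℝ (Fin n)) 1)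
        * maxFn n (waveletSum n c j') x := by
  set r := (R + 2 * √n) / 2 ^ j'
  set vQ := ENNReal.ofReal (((2 : ℝ) ^ j')⁻¹ ^ n)
  have hvQ : vQ ≠ 0 := by simp only [vQ, ne_eq, ENNReal.ofReal_eq_zero, not_le]; positivity
  refine (ENNReal.mul_le_mul_iff_left hvQ ENNReal.ofReal_ne_top).mp ?_
  calc (∑' k', if ‖intPt n k' - (2 : ℝ) ^ (j' - j) • intPt n k‖ < R then (c k' : ℝ≥0∞) else 0)
        * vQ
      ≤ ∑' k', (c k' : ℝ≥0∞) * volume (dyadicCube n j' k' ∩ ball x r) := by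
        rw [← ENNReal.tsum_mul_right]
        refine ENNReal.tsum_le_tsum fun k' => ?_
        split_ifs with hk'
        · rw [Set.inter_eq_self_of_subset_left (dyadicCube_subset_ball hj hx hk'),
            volume_dyadicCube]
        · rw [zero_mul]; exact zero_le
    _ = ∫⁻ y in ball x r, waveletSum n c j' y := (setLIntegral_waveletSum c j').symm
    _ ≤ maxFn n (waveletSum n c j') x * volume (ball x r) :=
        setLIntegral_ball_le_maxFn_mul_volume _ x (by positivity)
    _ = _ := by rw [volume_ball_div_zpow x (by positivity)]; ring

end

lemma mul_ofReal_one_add_rpow_neg_le_tsum {d N : ℝ} (hd : 0 ≤ d) (hN : 0 ≤ N) (a : ℝ≥0∞) :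
    a * ENNReal.ofReal ((1 + d) ^ (-N))
      ≤ ∑' m : ℕ, (if d < 2 ^ (m + 1) then a else 0) * ENNReal.ofReal (((2 : ℝ) ^ m) ^ (-N)) := by
  obtain ⟨m, hm_le, hm_lt⟩ := exists_nat_pow_near (by linarith : (1 : ℝ) ≤ 1 + d) one_lt_two
  calc a * ENNReal.ofReal ((1 + d) ^ (-N))
      ≤ a * ENNReal.ofReal (((2 : ℝ) ^ m) ^ (-N)) := by
        refine mul_le_mul_right (ENNReal.ofReal_le_ofReal ?_) a
        exact Real.rpow_le_rpow_of_nonpos (by positivity) hm_le (neg_nonpos.mpr hN)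
    _ = (if d < 2 ^ (m + 1) then a else 0) * ENNReal.ofReal (((2 : ℝ) ^ m) ^ (-N)) := by
        rw [if_pos (by linarith)]
    _ ≤ _ := ENNReal.le_tsum m

lemma rpow_neg_mul_pow_le {a : ℝ} (ha : 0 ≤ a) (n : ℕ) (N : ℝ) (m : ℕ) :
    ((2 : ℝ) ^ m) ^ (-N) * ((2 : ℝ) ^ (m + 1) + a) ^ n
      ≤ (2 + a) ^ n * ((2 : ℝ) ^ ((n : ℝ) - N)) ^ m := by
  have h2m : (0 : ℝ) < 2 ^ m := by positivity
  have hbase : (2 : ℝ) ^ (m + 1) + a ≤ 2 ^ m * (2 + a) := by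
    have : (1 : ℝ) ≤ 2 ^ m := one_le_pow₀ one_le_two
    rw [pow_succ]; nlinarith
  calc ((2 : ℝ) ^ m) ^ (-N) * ((2 : ℝ) ^ (m + 1) + a) ^ n
      ≤ ((2 : ℝ) ^ m) ^ (-N) * ((2 : ℝ) ^ m * (2 + a)) ^ n := by gcongr
    _ = (2 + a) ^ n * (((2 : ℝ) ^ m) ^ (-N) * ((2 : ℝ) ^ m) ^ (n : ℝ)) := by
        rw [mul_pow, Real.rpow_natCast]; ring
    _ = (2 + a) ^ n * ((2 : ℝ) ^ ((n : ℝ) - N)) ^ m := by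
        rw [← Real.rpow_add h2m, ← Real.rpow_natCast 2 m, ← Real.rpow_mul zero_le_two,
          ← Real.rpow_mul_natCast zero_le_two]
        ring_nf

noncomputable def maximalConst (n : ℕ) (N : ℝ) : ℝ≥0∞ :=
  volume (ball (0 : EuclideanSpace ℝ (Fin n)) 1) * ENNReal.ofReal ((2 + 2 * √n) ^ n)
    * (1 - ENNReal.ofReal (2 ^ ((n : ℝ) - N)))⁻¹

lemma maximalConst_ne_zero (n : ℕ) (N : ℝ) : maximalConst n N ≠ 0 := by
  refine mul_ne_zero (mul_ne_zero (measure_ball_pos _ _ one_pos).ne' ?_) ?_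
  · rw [ne_eq, ENNReal.ofReal_eq_zero, not_le]; positivity
  · exact ENNReal.inv_ne_zero.mpr (ne_top_of_le_ne_top ENNReal.one_ne_top tsub_le_self)

lemma maximalConst_ne_top {n : ℕ} {N : ℝ} (hN : n < N) : maximalConst n N ≠ ⊤ := by
  refine ENNReal.mul_ne_top (ENNReal.mul_ne_top measure_ball_lt_top.ne ENNReal.ofReal_ne_top) ?_
  rw [ENNReal.inv_ne_top, ne_eq, tsub_eq_zero_iff_le, not_le, ENNReal.ofReal_lt_one]
  exact Real.rpow_lt_one_of_one_lt_of_neg one_lt_two (by linarith)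

lemma tsum_mul_decay_le_maximalConst_mul_maxFn {n : ℕ} {N : ℝ} (hN : 0 ≤ N)
    (c : (Fin n → ℤ) → NNReal) {j j' : ℤ} (hj : j' ≤ j) {k : Fin n → ℤ}
    {x : EuclideanSpace ℝ (Fin n)} (hx : (2 : ℝ) ^ j • x - intPt n k ∈ unitCube n) :
    ∑' k', (c k' : ℝ≥0∞) *
        ENNReal.ofReal ((1 + ‖intPt n k' - (2 : ℝ) ^ (j' - j) • intPt n k‖) ^ (-N))
      ≤ maximalConst n N * maxFn n (waveletSum n c j') x := by
  set d := fun k' => ‖intPt n k' - (2 : ℝ) ^ (j' - j) • intPt n k‖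
  set M := maxFn n (waveletSum n c j') x
  set V := volume (ball (0 : EuclideanSpace ℝ (Fin n)) 1)
  set w := fun m : ℕ => ((2 : ℝ) ^ m) ^ (-N)
  calc ∑' k', (c k' : ℝ≥0∞) * ENNReal.ofReal ((1 + d k') ^ (-N))
      ≤ ∑' k', ∑' m : ℕ, (if d k' < 2 ^ (m + 1) then (c k' : ℝ≥0∞) else 0)
          * ENNReal.ofReal (w m) :=
        ENNReal.tsum_le_tsum fun k' => mul_ofReal_one_add_rpow_neg_le_tsum (norm_nonneg _) hN _
    _ = ∑' m : ℕ, (∑' k', if d k' < 2 ^ (m + 1) then (c k' : ℝ≥0∞) else 0)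
          * ENNReal.ofReal (w m) := by
        rw [ENNReal.tsum_comm]; simp_rw [ENNReal.tsum_mul_right]
    _ ≤ ∑' m : ℕ, ENNReal.ofReal (((2 : ℝ) ^ (m + 1) + 2 * √n) ^ n) * V * M
          * ENNReal.ofReal (w m) :=
        ENNReal.tsum_le_tsum fun m =>
          mul_le_mul_left (tsum_coeff_le_maxFn hj hx c (by positivity)) _
    _ = V * M * ∑' m : ℕ, ENNReal.ofReal (w m * ((2 : ℝ) ^ (m + 1) + 2 * √n) ^ n) := by
        rw [← ENNReal.tsum_mul_left]
        refine tsum_congr fun m => ?_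
        rw [ENNReal.ofReal_mul (by positivity)]; ring
    _ ≤ V * M * ∑' m : ℕ, ENNReal.ofReal ((2 + 2 * √n) ^ n)
          * ENNReal.ofReal (2 ^ ((n : ℝ) - N)) ^ m := by
        gcongr with m
        rw [← ENNReal.ofReal_pow (by positivity), ← ENNReal.ofReal_mul (by positivity)]
        exact ENNReal.ofReal_le_ofReal (rpow_neg_mul_pow_le (by positivity) n N m)
    _ = maximalConst n N * M := by
        rw [ENNReal.tsum_mul_left, ENNReal.tsum_geometric, maximalConst]; ring

theorem sum_le_maximal_of_ge_general (n : ℕ) (N : ℝ) (hN : 2 * (n : ℝ) + 1 < N) :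
    ∃ C : ℝ, 0 < C ∧
      ∀ (c : (Fin n → ℤ) → NNReal) (j j' : ℤ), j' ≤ j →
        ∀ (k : Fin n → ℤ) (x : EuclideanSpace ℝ (Fin n)),
          (2 : ℝ) ^ j • x - intPt n k ∈ unitCube n →
          (∑' k' : Fin n → ℤ, (c k' : ℝ≥0∞) *
              ENNReal.ofReal ((1 + ‖intPt n k' - (2 : ℝ) ^ (j' - j) • intPt n k‖) ^ (-N)))
            ≤ ENNReal.ofReal C * maxFn n (waveletSum n c j') x := by
  have hnN : (n : ℝ) < N := by linarith [(Nat.cast_nonneg n : (0 : ℝ) ≤ n)]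
  refine ⟨(maximalConst n N).toReal,
    ENNReal.toReal_pos (maximalConst_ne_zero n N) (maximalConst_ne_top hnN), ?_⟩
  intro c j j' hj k x hx
  rw [ENNReal.ofReal_toReal (maximalConst_ne_top hnN)]
  exact tsum_mul_decay_le_maximalConst_mul_maxFn (by linarith) c hj hx

/-- Lemma 2.6, case `j ≥ j'`: for `N > 2n+1` there is `C = C(n, N) > 0` such that for
`j ≥ j'`, `k ∈ ℤⁿ` and `x` with `2^j x - k ∈ [0,1)ⁿ`,
`∑_{k'} c(k') (1+‖k' - 2^{j'-j} k‖)^{-N} ≤ C · M f_{j'}(x)`. -/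
theorem sum_le_maximal_of_ge (n : ℕ) (hn : 1 ≤ n) (N : ℝ) (hN : 2 * (n : ℝ) + 1 < N) :
    ∃ C : ℝ, 0 < C ∧
      ∀ (c : (Fin n → ℤ) → NNReal) (j j' : ℤ), j' ≤ j →
        ∀ (k : Fin n → ℤ) (x : EuclideanSpace ℝ (Fin n)),
          (2 : ℝ) ^ j • x - intPt n k ∈ unitCube n →
          (∑' k' : Fin n → ℤ, (c k' : ℝ≥0∞) *
              ENNReal.ofReal ((1 + ‖intPt n k' - (2 : ℝ) ^ (j' - j) • intPt n k‖) ^ (-N)))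
            ≤ ENNReal.ofReal C * maxFn n (waveletSum n c j') x :=
  sum_le_maximal_of_ge_general n N hN
end

section
/- Let n ≥ 1, let 0 < a < b be real numbers, and let N ∈ ℕ. For every Schwartz function ψ : ℝⁿ → ℂ whose Fourier transform 𝓕ψ vanishes at every ξ with ‖ξ‖ < a or ‖ξ‖ > b, there exist constants C > 0 and c > 0 such that for every t ≥ 0 and every x ∈ ℝⁿ: |∫_{ℝⁿ} e^{−t‖ξ‖²} (𝓕ψ)(ξ) e^{2πi⟨x,ξ⟩} dξ| ≤ C · e^{−c t} · (1 + ‖x‖)^{−N}. (That is, the heat evolution of a frequency-annulus-localized Schwartz function decays exponentially in time and polynomially in space, with polynomial rate of any prescribed order.) -/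
/-!
On the Fourier side the heat evolution is multiplication by `e^{-t‖ξ‖²}`, and `𝓕ψ` lives where
`‖ξ‖ ≥ a`. There every derivative of `e^{-t‖ξ‖²}` is at most `e^{-ta²}` times a polynomial in `t`
and `‖ξ‖`, so after multiplying by `e^{ta²/2}` the functions `e^{-t‖·‖²} 𝓕ψ`, `t ≥ 0`, form a
bounded subset of the Schwartz space. The inverse Fourier transform is continuous on the Schwartz
space, so it maps this set to a bounded set, whose elements decay like `(1 + ‖x‖)^{-N}` uniformly.
-/

open MeasureTheory FourierTransform SchwartzMap
open scoped Nat

lemma exists_one_add_mul_pow_le_mul_exp {C s : ℝ} (hC : 0 ≤ C) (hs : 0 < s) (l : ℕ) :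
    ∃ K > 0, ∀ t : ℝ, 0 ≤ t → (1 + C * t) ^ l ≤ K * Real.exp (s * t) := by
  set u : ℝ → ℝ := fun t => s * t / (l + 1)
  refine ⟨(1 + C * (l + 1) / s) ^ l, by positivity, fun t ht => ?_⟩
  have hu : 0 ≤ u t := by positivity
  have hlin : 1 + C * t ≤ (1 + C * (l + 1) / s) * Real.exp (u t) := by
    have h1 : 1 ≤ Real.exp (u t) := Real.one_le_exp hu
    have h2 : u t ≤ Real.exp (u t) := by linarith [Real.add_one_le_exp (u t)]
    have hCt : C * t = C * (l + 1) / s * u t := by simp only [u]; field_simp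
    rw [hCt, add_mul, one_mul]
    gcongr
  calc (1 + C * t) ^ l ≤ ((1 + C * (l + 1) / s) * Real.exp (u t)) ^ l := by gcongr
    _ = (1 + C * (l + 1) / s) ^ l * Real.exp (l * u t) := by rw [mul_pow, Real.exp_nat_mul]
    _ ≤ (1 + C * (l + 1) / s) ^ l * Real.exp (s * t) := by
        have hlu : l * u t ≤ s * t := by
          rw [mul_div_assoc', div_le_iff₀ (by positivity)]
          nlinarith [mul_nonneg hs.le ht]
        gcongr

lemma norm_iteratedFDeriv_fun_id_le {E : Type*} [NormedAddCommGroup E] [NormedSpace ℝ E]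
    (m : ℕ) (x : E) : ‖iteratedFDeriv ℝ m (fun y : E => y) x‖ ≤ 1 + ‖x‖ := by
  match m with
  | 0 => rw [norm_iteratedFDeriv_zero]; linarith
  | 1 =>
    rw [norm_iteratedFDeriv_one, fderiv_fun_id]
    linarith [ContinuousLinearMap.norm_id_le (𝕜 := ℝ) (E := E), norm_nonneg x]
  | m + 2 =>
    have hderiv : fderiv ℝ (fun y : E => y) = fun _ => ContinuousLinearMap.id ℝ E :=
      funext fun _ => fderiv_fun_id
    rw [← norm_iteratedFDeriv_fderiv, hderiv, iteratedFDeriv_const_of_ne m.succ_ne_zero]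
    simp only [Pi.zero_apply, norm_zero]
    positivity

section InnerProductSpace

variable {E : Type*} [NormedAddCommGroup E] [InnerProductSpace ℝ E]

lemma norm_iteratedFDeriv_norm_sq_le (j : ℕ) (x : E) :
    ‖iteratedFDeriv ℝ j (fun y : E => ‖y‖ ^ 2) x‖ ≤ 2 ^ j * (1 + ‖x‖) ^ 2 := by
  have hinner : (fun y : E => ‖y‖ ^ 2) = fun y => innerSL ℝ y y := by
    ext y; rw [innerSL_apply_apply, real_inner_self_eq_norm_sq]
  rw [hinner]
  refine ((innerSL ℝ).norm_iteratedFDeriv_le_of_bilinear_of_le_one contDiff_id contDiff_id x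
    (n := j) (by exact_mod_cast le_top) (norm_innerSL_le ℝ)).trans ?_
  calc ∑ i ∈ Finset.range (j + 1), (j.choose i : ℝ) *
        ‖iteratedFDeriv ℝ i (fun y : E => y) x‖ * ‖iteratedFDeriv ℝ (j - i) (fun y : E => y) x‖
      ≤ ∑ i ∈ Finset.range (j + 1), (j.choose i : ℝ) * (1 + ‖x‖) * (1 + ‖x‖) := by
        gcongr with i
        · exact norm_iteratedFDeriv_fun_id_le i x
        · exact norm_iteratedFDeriv_fun_id_le (j - i) x
    _ = 2 ^ j * (1 + ‖x‖) ^ 2 := by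
        rw [← Finset.sum_mul, ← Finset.sum_mul, ← Nat.cast_sum, Nat.sum_range_choose]
        push_cast; ring

lemma norm_iteratedFDeriv_exp_neg_mul_norm_sq_le {t : ℝ} (ht : 0 ≤ t) (l : ℕ) (x : E) :
    ‖iteratedFDeriv ℝ l (fun y : E => Real.exp (-(t * ‖y‖ ^ 2))) x‖ ≤
      l ! * Real.exp (-(t * ‖x‖ ^ 2)) * ((1 + 2 ^ l * t) * (1 + ‖x‖) ^ 2) ^ l := by
  have hq : ContDiff ℝ ⊤ fun y : E => -(t * ‖y‖ ^ 2) :=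
    (contDiff_const.mul (contDiff_norm_sq ℝ)).neg
  have hD_one : 1 ≤ (1 + 2 ^ l * t) * (1 + ‖x‖) ^ 2 :=
    one_le_mul_of_one_le_of_one_le (by nlinarith [pow_pos (two_pos : (0:ℝ) < 2) l])
      (one_le_pow₀ (by linarith [norm_nonneg x]))
  refine norm_iteratedFDeriv_comp_le (g := Real.exp) Real.contDiff_exp hq
    (by exact_mod_cast le_top) x (fun i _ => ?_) (fun i hi hil => ?_)
  · rw [norm_iteratedFDeriv_eq_norm_iteratedDeriv, iteratedDeriv_eq_iterate,
      Real.iter_deriv_exp, Real.norm_of_nonneg (Real.exp_pos _).le]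
  · have hneg : (fun y : E => -(t * ‖y‖ ^ 2)) = (-t) • fun y : E => ‖y‖ ^ 2 := by
      ext y; simp
    rw [hneg, iteratedFDeriv_const_smul_apply ((contDiff_norm_sq ℝ).of_le le_top).contDiffAt,
      norm_smul, norm_neg, Real.norm_of_nonneg ht]
    calc t * ‖iteratedFDeriv ℝ i (fun y : E => ‖y‖ ^ 2) x‖
        ≤ t * (2 ^ l * (1 + ‖x‖) ^ 2) := by
          gcongr
          exact (norm_iteratedFDeriv_norm_sq_le i x).trans (by gcongr; norm_num)
      _ ≤ (1 + 2 ^ l * t) * (1 + ‖x‖) ^ 2 := by nlinarith [sq_nonneg (1 + ‖x‖)]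
      _ ≤ ((1 + 2 ^ l * t) * (1 + ‖x‖) ^ 2) ^ i := le_self_pow₀ hD_one (by omega)

lemma hasTemperateGrowth_exp_neg_mul_norm_sq {t : ℝ} (ht : 0 ≤ t) :
    (fun y : E => Real.exp (-(t * ‖y‖ ^ 2))).HasTemperateGrowth := by
  refine ⟨Real.contDiff_exp.comp (contDiff_const.mul (contDiff_norm_sq ℝ)).neg,
    fun l => ⟨2 * l, l ! * (1 + 2 ^ l * t) ^ l, fun x => ?_⟩⟩
  refine (norm_iteratedFDeriv_exp_neg_mul_norm_sq_le ht l x).trans ?_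
  have hexp : Real.exp (-(t * ‖x‖ ^ 2)) ≤ 1 := Real.exp_le_one_iff.2 (by nlinarith [norm_nonneg x])
  calc (l ! : ℝ) * Real.exp (-(t * ‖x‖ ^ 2)) * ((1 + 2 ^ l * t) * (1 + ‖x‖) ^ 2) ^ l
      ≤ l ! * 1 * ((1 + 2 ^ l * t) * (1 + ‖x‖) ^ 2) ^ l := by gcongr
    _ = l ! * (1 + 2 ^ l * t) ^ l * (1 + ‖x‖) ^ (2 * l) := by rw [mul_pow, pow_mul]; ring

lemma norm_iteratedFDeriv_exp_neg_mul_norm_sq_le_of_le {a t : ℝ} (ha : 0 ≤ a) (ht : 0 ≤ t)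
    {i l : ℕ} (hil : i ≤ l) {x : E} (hx : a ≤ ‖x‖) :
    ‖iteratedFDeriv ℝ i (fun y : E => Real.exp (-(t * ‖y‖ ^ 2))) x‖ ≤
      l ! * (1 + 2 ^ l * t) ^ l * Real.exp (-(t * a ^ 2)) * (1 + ‖x‖) ^ (2 * l) := by
  refine (norm_iteratedFDeriv_exp_neg_mul_norm_sq_le ht i x).trans ?_
  calc (i ! : ℝ) * Real.exp (-(t * ‖x‖ ^ 2)) * ((1 + 2 ^ i * t) * (1 + ‖x‖) ^ 2) ^ i
      = i ! * (1 + 2 ^ i * t) ^ i * Real.exp (-(t * ‖x‖ ^ 2)) * (1 + ‖x‖) ^ (2 * i) := by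
        rw [mul_pow, pow_mul]; ring
    _ ≤ l ! * (1 + 2 ^ l * t) ^ l * Real.exp (-(t * a ^ 2)) * (1 + ‖x‖) ^ (2 * l) := by
        gcongr ?_ * ?_ * ?_ * ?_
        · exact_mod_cast Nat.factorial_le hil
        · calc (1 + 2 ^ i * t) ^ i ≤ (1 + 2 ^ l * t) ^ i := by
                gcongr; exact one_le_two
            _ ≤ (1 + 2 ^ l * t) ^ l :=
                pow_le_pow_right₀ (by nlinarith [pow_pos (two_pos : (0:ℝ) < 2) l]) hil
        · gcongr
        · exact pow_le_pow_right₀ (by linarith [norm_nonneg x]) (by omega)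

variable {G : Type*} [NormedAddCommGroup G] [NormedSpace ℝ G]

lemma pow_mul_norm_iteratedFDeriv_exp_neg_mul_norm_sq_smul_le {a t : ℝ} (ha : 0 ≤ a)
    (ht : 0 ≤ t) (f : 𝓢(E, G)) (k l : ℕ) {x : E} (hx : a ≤ ‖x‖) :
    ‖x‖ ^ k * ‖iteratedFDeriv ℝ l (fun y => Real.exp (-(t * ‖y‖ ^ 2)) • f y) x‖ ≤
      2 ^ (k + 3 * l) * (l ! * (1 + 2 ^ l * t) ^ l * Real.exp (-(t * a ^ 2))) *
        (Finset.Iic (k + 2 * l, l)).sup (schwartzSeminormFamily ℝ E G) f := by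
  set g : E → ℝ := fun y => Real.exp (-(t * ‖y‖ ^ 2))
  set A : ℝ := l ! * (1 + 2 ^ l * t) ^ l * Real.exp (-(t * a ^ 2))
  set S : ℝ := (Finset.Iic (k + 2 * l, l)).sup (schwartzSeminormFamily ℝ E G) f
  have hleibniz := norm_iteratedFDeriv_smul_le (f := g) (g := ⇑f)
    (hasTemperateGrowth_exp_neg_mul_norm_sq ht).1 (f.smooth ⊤) x (n := l)
    (by exact_mod_cast le_top)
  calc ‖x‖ ^ k * ‖iteratedFDeriv ℝ l (fun y => g y • f y) x‖
      ≤ ‖x‖ ^ k * ∑ i ∈ Finset.range (l + 1),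
          (l.choose i : ℝ) * ‖iteratedFDeriv ℝ i g x‖ * ‖iteratedFDeriv ℝ (l - i) f x‖ :=
        mul_le_mul_of_nonneg_left hleibniz (by positivity)
    _ ≤ ∑ i ∈ Finset.range (l + 1), (l.choose i : ℝ) * (A * 2 ^ (k + 2 * l) * S) := by
        rw [Finset.mul_sum]
        refine Finset.sum_le_sum fun i hi => ?_
        have hil : i ≤ l := Nat.lt_succ_iff.1 (Finset.mem_range.1 hi)
        have hdecay : (1 + ‖x‖) ^ (k + 2 * l) * ‖iteratedFDeriv ℝ (l - i) f x‖ ≤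
            2 ^ (k + 2 * l) * S :=
          one_add_le_sup_seminorm_apply (m := (k + 2 * l, l)) le_rfl (Nat.sub_le l i) f x
        calc ‖x‖ ^ k * ((l.choose i : ℝ) * ‖iteratedFDeriv ℝ i g x‖ *
              ‖iteratedFDeriv ℝ (l - i) f x‖)
            ≤ (1 + ‖x‖) ^ k * ((l.choose i : ℝ) * (A * (1 + ‖x‖) ^ (2 * l)) *
              ‖iteratedFDeriv ℝ (l - i) f x‖) := by
              gcongr
              · linarith
              · exact norm_iteratedFDeriv_exp_neg_mul_norm_sq_le_of_le ha ht hil hx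
          _ = l.choose i * A * ((1 + ‖x‖) ^ (k + 2 * l) * ‖iteratedFDeriv ℝ (l - i) f x‖) := by
              ring
          _ ≤ l.choose i * A * (2 ^ (k + 2 * l) * S) := by gcongr
          _ = l.choose i * (A * 2 ^ (k + 2 * l) * S) := by ring
    _ = 2 ^ (k + 3 * l) * A * S := by
        rw [← Finset.sum_mul, ← Nat.cast_sum, Nat.sum_range_choose]
        push_cast; ring

lemma seminorm_smulLeftCLM_exp_neg_mul_norm_sq_le {a t : ℝ} (ha : 0 ≤ a) (ht : 0 ≤ t)
    {f : 𝓢(E, G)} (hf : ∀ ξ : E, ‖ξ‖ < a → f ξ = 0) (k l : ℕ) :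
    SchwartzMap.seminorm ℝ k l (smulLeftCLM G (fun y : E => Real.exp (-(t * ‖y‖ ^ 2))) f) ≤
      2 ^ (k + 3 * l) * (l ! * (1 + 2 ^ l * t) ^ l * Real.exp (-(t * a ^ 2))) *
        (Finset.Iic (k + 2 * l, l)).sup (schwartzSeminormFamily ℝ E G) f := by
  refine seminorm_le_bound ℝ k l _ (by positivity) fun x => ?_
  rw [smulLeftCLM_apply (hasTemperateGrowth_exp_neg_mul_norm_sq ht)]
  rcases lt_or_ge ‖x‖ a with hx | hx
  · have hzero : (fun y => Real.exp (-(t * ‖y‖ ^ 2)) • f y) =ᶠ[nhds x] 0 := by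
      filter_upwards [(isOpen_lt continuous_norm continuous_const).mem_nhds hx] with y hy
      simp [hf y hy]
    rw [(hzero.iteratedFDeriv ℝ l).eq_of_nhds]
    simp only [iteratedFDeriv_zero, Pi.zero_apply, norm_zero, mul_zero]
    positivity
  · exact pow_mul_norm_iteratedFDeriv_exp_neg_mul_norm_sq_smul_le ha ht f k l hx

lemma isVonNBounded_exp_mul_smul_smulLeftCLM_exp_neg_mul_norm_sq {a c : ℝ} (ha : 0 ≤ a)
    (hc : c < a ^ 2) {f : 𝓢(E, G)} (hf : ∀ ξ : E, ‖ξ‖ < a → f ξ = 0) :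
    Bornology.IsVonNBounded ℝ ((fun t : ℝ => Real.exp (c * t) •
      smulLeftCLM G (fun y : E => Real.exp (-(t * ‖y‖ ^ 2))) f) '' Set.Ici 0) := by
  rw [(schwartz_withSeminorms ℝ E G).image_isVonNBounded_iff_seminorm_bounded]
  rintro ⟨k, l⟩
  set S : ℝ := (Finset.Iic (k + 2 * l, l)).sup (schwartzSeminormFamily ℝ E G) f
  obtain ⟨K, hK0, hK⟩ := exists_one_add_mul_pow_le_mul_exp (C := 2 ^ l) (by positivity)
    (sub_pos.2 hc) l
  refine ⟨2 ^ (k + 3 * l) * (l ! * K) * S + 1, by positivity, fun t (ht : 0 ≤ t) => ?_⟩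
  rw [schwartzSeminormFamily_apply, map_smul_eq_mul, Real.norm_of_nonneg (Real.exp_pos _).le]
  refine lt_of_le_of_lt ?_ (lt_add_one _)
  calc Real.exp (c * t) * SchwartzMap.seminorm ℝ k l
        (smulLeftCLM G (fun y : E => Real.exp (-(t * ‖y‖ ^ 2))) f)
      ≤ Real.exp (c * t) *
          (2 ^ (k + 3 * l) * (l ! * (1 + 2 ^ l * t) ^ l * Real.exp (-(t * a ^ 2))) * S) := by
        gcongr
        exact seminorm_smulLeftCLM_exp_neg_mul_norm_sq_le ha ht hf k l
    _ = 2 ^ (k + 3 * l) * (l ! * ((1 + 2 ^ l * t) ^ l * Real.exp (-((a ^ 2 - c) * t)))) * S := by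
        rw [show -((a ^ 2 - c) * t) = c * t + -(t * a ^ 2) by ring, Real.exp_add]; ring
    _ ≤ 2 ^ (k + 3 * l) * (l ! * K) * S := by
        gcongr
        rw [← le_div_iff₀ (Real.exp_pos _), Real.exp_neg, div_inv_eq_mul]
        exact hK t ht

end InnerProductSpace

lemma SchwartzMap.exists_one_add_norm_pow_mul_le_of_isVonNBounded {E G : Type*}
    [NormedAddCommGroup E] [NormedSpace ℝ E] [NormedAddCommGroup G] [NormedSpace ℝ G]
    {S : Set 𝓢(E, G)} (hS : Bornology.IsVonNBounded ℝ S) (N : ℕ) :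
    ∃ M > 0, ∀ f ∈ S, ∀ x : E, (1 + ‖x‖) ^ N * ‖f x‖ ≤ M := by
  obtain ⟨r, hr, hSr⟩ :=
    (schwartz_withSeminorms ℝ E G).isVonNBounded_iff_finset_seminorm_bounded.1 hS
      (Finset.Iic (N, 0))
  refine ⟨2 ^ N * r, by positivity, fun f hf x => ?_⟩
  have h := one_add_le_sup_seminorm_apply (𝕜 := ℝ) (m := (N, 0)) le_rfl le_rfl f x
  rw [norm_iteratedFDeriv_zero] at h
  exact h.trans (by gcongr; exact (hSr f hf).le)

theorem heat_annulus_decay_general (n : ℕ) (a b : ℝ) (ha : 0 < a)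
    (N : ℕ) (ψ : SchwartzMap (EuclideanSpace ℝ (Fin n)) ℂ)
    (hsupp : ∀ ξ : EuclideanSpace ℝ (Fin n), (‖ξ‖ < a ∨ b < ‖ξ‖) →
      FourierTransform.fourier (⇑ψ) ξ = 0) :
    ∃ C c : ℝ, 0 < C ∧ 0 < c ∧
      ∀ t : ℝ, 0 ≤ t → ∀ x : EuclideanSpace ℝ (Fin n),
        ‖∫ ξ : EuclideanSpace ℝ (Fin n),
            Real.exp (-(t * ‖ξ‖ ^ 2)) •
              (FourierTransform.fourier (⇑ψ) ξ *
                Complex.exp (2 * (Real.pi : ℂ) * Complex.I * ((inner ℝ x ξ : ℝ) : ℂ)))‖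
          ≤ C * Real.exp (-(c * t)) * (1 + ‖x‖) ^ (-(N : ℝ)) := by
  let heat (t : ℝ) : 𝓢(EuclideanSpace ℝ (Fin n), ℂ) :=
    smulLeftCLM ℂ (fun ξ : EuclideanSpace ℝ (Fin n) => Real.exp (-(t * ‖ξ‖ ^ 2))) (𝓕 ψ)
  have hgap : ∀ ξ, ‖ξ‖ < a → 𝓕 ψ ξ = 0 := fun ξ hξ => hsupp ξ (Or.inl hξ)
  obtain ⟨M, hM0, hM⟩ := SchwartzMap.exists_one_add_norm_pow_mul_le_of_isVonNBounded
    ((isVonNBounded_exp_mul_smul_smulLeftCLM_exp_neg_mul_norm_sq ha.le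
      (by linarith [pow_pos ha 2] : a ^ 2 / 2 < a ^ 2) hgap).image
      (fourierInvCLM ℝ 𝓢(EuclideanSpace ℝ (Fin n), ℂ))) N
  refine ⟨M, a ^ 2 / 2, hM0, by positivity, fun t ht x => ?_⟩
  have hintegral : (∫ ξ : EuclideanSpace ℝ (Fin n), Real.exp (-(t * ‖ξ‖ ^ 2)) • (𝓕 (⇑ψ) ξ *
      Complex.exp (2 * (Real.pi : ℂ) * Complex.I * ((inner ℝ x ξ : ℝ) : ℂ)))) = 𝓕⁻ (heat t) x := by
    rw [fourierInv_coe, Real.fourierInv_eq',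
      smulLeftCLM_apply (hasTemperateGrowth_exp_neg_mul_norm_sq ht)]
    congr 1
    ext ξ
    rw [show 𝓕 (⇑ψ) ξ = 𝓕 ψ ξ from rfl]
    simp only [real_inner_comm, Complex.real_smul, Complex.ofReal_mul, Complex.ofReal_ofNat,
      smul_eq_mul]
    ring_nf
  have hbound := hM _ ⟨_, ⟨t, ht, rfl⟩, rfl⟩ x
  rw [map_smul, fourierInvCLM_apply, smul_apply, norm_smul,
    Real.norm_of_nonneg (Real.exp_pos _).le] at hbound
  rw [hintegral, Real.rpow_neg (by positivity), Real.rpow_natCast, Real.exp_neg, mul_assoc,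
    ← mul_inv, ← div_eq_mul_inv, le_div_iff₀ (by positivity)]
  linarith

/-- Lemma 4.1 (first set of estimates): the heat evolution of a frequency-annulus-localized
Schwartz function decays exponentially in time and polynomially in space of any order `N`. -/
theorem heat_annulus_decay (n : ℕ) (hn : 1 ≤ n) (a b : ℝ) (ha : 0 < a) (hab : a < b)
    (N : ℕ) (ψ : SchwartzMap (EuclideanSpace ℝ (Fin n)) ℂ)
    (hsupp : ∀ ξ : EuclideanSpace ℝ (Fin n), (‖ξ‖ < a ∨ b < ‖ξ‖) →
      FourierTransform.fourier (⇑ψ) ξ = 0) :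
    ∃ C c : ℝ, 0 < C ∧ 0 < c ∧
      ∀ t : ℝ, 0 ≤ t → ∀ x : EuclideanSpace ℝ (Fin n),
        ‖∫ ξ : EuclideanSpace ℝ (Fin n),
            Real.exp (-(t * ‖ξ‖ ^ 2)) •
              (FourierTransform.fourier (⇑ψ) ξ *
                Complex.exp (2 * (Real.pi : ℂ) * Complex.I * ((inner ℝ x ξ : ℝ) : ℂ)))‖
          ≤ C * Real.exp (-(c * t)) * (1 + ‖x‖) ^ (-(N : ℝ)) :=
  heat_annulus_decay_general n a b ha N ψ hsupp
end

section
/- Let n ≥ 1, 1 < p < ∞, 1 ≤ q < ∞, m' ≥ 0, and C₀ > 0. Let (F_j)_{j∈ℤ} and (G_j)_{j∈ℤ} be families of measurable functions ℝⁿ → [0,∞] such that for every j ∈ ℤ and every x ∈ ℝⁿ, F_j(x) ≤ C₀ · Σ_{j'∈ℤ, |j−j'|≤1} M G_{j'}(x). Then there exists a constant C > 0, depending only on n, p, q, m', C₀, such that sup_{j_t∈ℤ} Σ_{j<j_t} ( 2^{2(j−j_t)m'} · 2^{j(n/p−1)} · ‖F_j‖_{L^{p,∞}} )^q ≤ C ·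 Σ_{j'∈ℤ} ( 2^{j'(n/p−1)} · ‖G_{j'}‖_{L^{p,∞}} )^q. -/
open MeasureTheory ENNReal

/-- The weak-`L^p` quasinorm `sup_{λ>0} λ |{x : h x > λ}|^{1/p}` of `h : ℝⁿ → [0,∞]`. -/
noncomputable def wLp (n : ℕ) (p : ℝ) (h : EuclideanSpace ℝ (Fin n) → ℝ≥0∞) : ℝ≥0∞ :=
  ⨆ (l : NNReal) (_ : 0 < l), (l : ℝ≥0∞) * (volume {x | (l : ℝ≥0∞) < h x}) ^ (1 / p)

/-!
The maximal function is of weak type `(1, 1)` by the Vitali covering lemma. Splitting `g` at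
height `λ / 2`, the part below has maximal function at most `λ / 2`, while the integral of the
part above is bounded, through a dyadic decomposition of its range, by
`λ ^ (1 - p) ‖g‖_{L^{p,∞}} ^ p` times a geometric series that converges because `p > 1`; hence
`M` is bounded on `L^{p,∞}`. As `‖·‖_{L^{p,∞}}` is a quasinorm, `‖F_j‖ ≲ ∑_{|j-j'| ≤ 1} ‖G_{j'}‖`.
The weights `2 ^ (j (n/p - 1))` of neighbouring indices differ by at most `2 ^ |n/p - 1|`, and
`2 ^ (2 (j - j_t) m') ≤ 1` for `j < j_t`, so the estimate reduces to the `ℓ^q` bound for the sum of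
three shifts of a sequence.
-/

open Metric Set Module
open scoped NNReal

section Covering

variable {E : Type*} [NormedAddCommGroup E] [NormedSpace ℝ E] [FiniteDimensional ℝ E]
  [MeasurableSpace E] [BorelSpace E] (μ : Measure E) [μ.IsAddHaarMeasure]

theorem measure_closedBall_four_mul (x : E) {r : ℝ} (hr : 0 < r) :
    μ (closedBall x (4 * r)) = 4 ^ finrank ℝ E * μ (ball x r) := by
  rw [Measure.addHaar_closedBall μ x (by positivity), Measure.addHaar_ball_of_pos μ x hr,
    mul_pow, ENNReal.ofReal_mul (by norm_num), ENNReal.ofReal_pow (by norm_num), mul_assoc]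
  norm_num

variable {μ} {s : Set E} {g : E → ℝ≥0∞} {l : ℝ≥0∞}

theorem mul_measure_le_of_le_setLIntegral_ball_of_radius_le {r : E → ℝ} {R : ℝ}
    (hr : ∀ x ∈ s, 0 < r x ∧ r x ≤ R)
    (hg : ∀ x ∈ s, l * μ (ball x (r x)) ≤ ∫⁻ y in ball x (r x), g y ∂μ) :
    l * μ s ≤ 4 ^ finrank ℝ E * ∫⁻ y, g y ∂μ := by
  obtain ⟨u, hus, hdisj, hcover⟩ := Vitali.exists_disjoint_subfamily_covering_enlargement_closedBall
    s id r R (fun x hx => (hr x hx).2) 4 (by norm_num)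
  simp only [id] at hdisj hcover
  have hu : u.Countable := hdisj.countable_of_nonempty_interior fun x hx =>
    ⟨x, ball_subset_interior_closedBall (mem_ball_self (hr x (hus hx)).1)⟩
  have hsub : s ⊆ ⋃ x ∈ u, closedBall x (4 * r x) := fun x hx => by
    obtain ⟨b, hb, hxb⟩ := hcover x hx
    exact mem_biUnion hb (hxb (mem_closedBall_self (hr x hx).1.le))
  calc l * μ s ≤ l * ∑' x : u, μ (closedBall x (4 * r x)) := by
        gcongr; exact (measure_mono hsub).trans (measure_biUnion_le μ hu _)
    _ = 4 ^ finrank ℝ E * ∑' x : u, l * μ (ball x (r x)) := by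
        rw [← ENNReal.tsum_mul_left, ← ENNReal.tsum_mul_left]
        refine tsum_congr fun x => ?_
        rw [measure_closedBall_four_mul μ _ (hr x (hus x.2)).1]
        ring
    _ ≤ 4 ^ finrank ℝ E * ∑' x : u, ∫⁻ y in ball x (r x), g y ∂μ := by
        gcongr with x; exact hg x (hus x.2)
    _ = 4 ^ finrank ℝ E * ∫⁻ y in ⋃ x ∈ u, ball x (r x), g y ∂μ := by
        rw [lintegral_biUnion hu (fun _ _ => measurableSet_ball)
          (hdisj.mono fun _ => ball_subset_closedBall)]
    _ ≤ 4 ^ finrank ℝ E * ∫⁻ y, g y ∂μ := by gcongr; exact Measure.restrict_le_self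

theorem mul_measure_le_of_le_setLIntegral_ball
    (hg : ∀ x ∈ s, ∃ r, 0 < r ∧ l * μ (ball x r) ≤ ∫⁻ y in ball x r, g y ∂μ) :
    l * μ s ≤ 4 ^ finrank ℝ E * ∫⁻ y, g y ∂μ := by
  choose! r hr0 hr using hg
  -- truncating the radii at `N` makes the Vitali covering lemma applicable
  have hs : s = ⋃ N : ℕ, {x ∈ s | r x ≤ N} := by
    ext x
    simp only [mem_iUnion, mem_ofPred_eq]
    exact ⟨fun hx => (exists_nat_ge (r x)).imp fun _ h => ⟨hx, h⟩, fun ⟨_, hx, _⟩ => hx⟩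
  have hmono : Monotone fun N : ℕ => {x ∈ s | r x ≤ N} := fun N M hNM x hx =>
    ⟨hx.1, hx.2.trans (Nat.cast_le.2 hNM)⟩
  rw [hs, hmono.measure_iUnion, ENNReal.mul_iSup]
  exact iSup_le fun N => mul_measure_le_of_le_setLIntegral_ball_of_radius_le
    (fun x hx => ⟨hr0 x hx.1, hx.2⟩) fun x hx => hr x hx.1

end Covering

variable {n : ℕ} {p : ℝ}

section WeakLp

theorem le_wLp (h : EuclideanSpace ℝ (Fin n) → ℝ≥0∞) {l : ℝ≥0} (hl : 0 < l) :
    (l : ℝ≥0∞) * volume {x | (l : ℝ≥0∞) < h x} ^ (1 / p) ≤ wLp n p h :=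
  le_iSup₂ (f := fun (l : ℝ≥0) (_ : 0 < l) =>
    (l : ℝ≥0∞) * volume {x | (l : ℝ≥0∞) < h x} ^ (1 / p)) l hl

theorem wLp_le {h : EuclideanSpace ℝ (Fin n) → ℝ≥0∞} {B : ℝ≥0∞}
    (hB : ∀ l : ℝ≥0, 0 < l → (l : ℝ≥0∞) * volume {x | (l : ℝ≥0∞) < h x} ^ (1 / p) ≤ B) :
    wLp n p h ≤ B :=
  iSup₂_le hB

theorem wLp_mono (hp : 0 ≤ p) {h₁ h₂ : EuclideanSpace ℝ (Fin n) → ℝ≥0∞} (h : h₁ ≤ h₂) :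
    wLp n p h₁ ≤ wLp n p h₂ :=
  wLp_le fun l hl => (le_wLp h₂ hl).trans' <| by
    gcongr
    exact h _

theorem wLp_const_mul_le (hp : 0 < p) (a : ℝ≥0) (h : EuclideanSpace ℝ (Fin n) → ℝ≥0∞) :
    wLp n p (fun x => a * h x) ≤ a * wLp n p h := by
  rcases eq_or_ne a 0 with rfl | ha
  · refine wLp_le fun l hl => ?_
    simp [hp]
  refine wLp_le fun l hl => ?_
  have hset : {x | (l : ℝ≥0∞) < a * h x} = {x | ((l / a : ℝ≥0) : ℝ≥0∞) < h x} := by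
    ext x
    rw [mem_ofPred_eq, mem_ofPred_eq, ENNReal.coe_div ha,
      ENNReal.div_lt_iff (Or.inl (by exact_mod_cast ha)) (Or.inl coe_ne_top), mul_comm]
  calc (l : ℝ≥0∞) * volume {x | (l : ℝ≥0∞) < a * h x} ^ (1 / p)
      = a * ((l / a : ℝ≥0) * volume {x | ((l / a : ℝ≥0) : ℝ≥0∞) < h x} ^ (1 / p)) := by
        rw [hset, ← mul_assoc, ← ENNReal.coe_mul, mul_div_cancel₀ _ ha]
    _ ≤ a * wLp n p h := by gcongr; exact le_wLp h (div_pos hl (pos_iff_ne_zero.2 ha))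

theorem wLp_add_le (hp : 1 ≤ p) (h₁ h₂ : EuclideanSpace ℝ (Fin n) → ℝ≥0∞) :
    wLp n p (h₁ + h₂) ≤ 2 * (wLp n p h₁ + wLp n p h₂) := by
  refine wLp_le fun l hl => ?_
  set c : ℝ≥0 := l / 2
  have hcl : (l : ℝ≥0∞) = 2 * c := by
    rw [← ENNReal.coe_ofNat, ← ENNReal.coe_mul, mul_div_cancel₀ _ two_ne_zero]
  have hset : {x | (l : ℝ≥0∞) < (h₁ + h₂) x} ⊆
      {x | (c : ℝ≥0∞) < h₁ x} ∪ {x | (c : ℝ≥0∞) < h₂ x} := by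
    intro x hx
    by_contra! hcon
    simp only [mem_union, mem_ofPred_eq, not_or, not_lt] at hcon
    exact (hx.trans_le (add_le_add hcon.1 hcon.2)).ne (by rw [hcl, two_mul])
  calc (l : ℝ≥0∞) * volume {x | (l : ℝ≥0∞) < (h₁ + h₂) x} ^ (1 / p)
      ≤ 2 * c * (volume {x | (c : ℝ≥0∞) < h₁ x} + volume {x | (c : ℝ≥0∞) < h₂ x}) ^ (1 / p) := by
        rw [hcl] at hset ⊢
        gcongr
        exact (measure_mono hset).trans (measure_union_le (μ := volume) _ _)
    _ ≤ 2 * c * (volume {x | (c : ℝ≥0∞) < h₁ x} ^ (1 / p) +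
          volume {x | (c : ℝ≥0∞) < h₂ x} ^ (1 / p)) := by
        gcongr
        exact ENNReal.rpow_add_le_add_rpow _ _ (by positivity)
          ((div_le_one (by linarith)).2 hp)
    _ ≤ 2 * (wLp n p h₁ + wLp n p h₂) := by
        have hc : 0 < c := by positivity
        rw [mul_assoc, mul_add]
        gcongr <;> exact le_wLp _ hc

theorem volume_lt_le_wLp_div_rpow (hp : 0 < p) (h : EuclideanSpace ℝ (Fin n) → ℝ≥0∞)
    {l : ℝ≥0∞} (hl : l ≠ 0) :
    volume {x | l < h x} ≤ (wLp n p h / l) ^ p := by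
  rcases eq_or_ne l ⊤ with rfl | hlt
  · simp
  lift l to ℝ≥0 using hlt
  have hle : volume {x | (l : ℝ≥0∞) < h x} ^ (1 / p) ≤ wLp n p h / l := by
    rw [ENNReal.le_div_iff_mul_le (Or.inl hl) (Or.inl coe_ne_top), mul_comm]
    exact le_wLp h (pos_iff_ne_zero.2 (by exact_mod_cast hl))
  calc volume {x | (l : ℝ≥0∞) < h x}
      = (volume {x | (l : ℝ≥0∞) < h x} ^ (1 / p)) ^ p := by
        rw [← ENNReal.rpow_mul, one_div_mul_cancel hp.ne', ENNReal.rpow_one]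
    _ ≤ (wLp n p h / l) ^ p := by gcongr

end WeakLp

section Maximal

theorem le_maxFn (g : EuclideanSpace ℝ (Fin n) → ℝ≥0∞) (x : EuclideanSpace ℝ (Fin n))
    {r : ℝ} (hr : 0 < r) :
    (∫⁻ y in ball x r, g y) / volume (ball x r) ≤ maxFn n g x :=
  le_iSup₂ (f := fun (r : ℝ) (_ : 0 < r) => (∫⁻ y in ball x r, g y) / volume (ball x r)) r hr

theorem maxFn_add_le {g₁ : EuclideanSpace ℝ (Fin n) → ℝ≥0∞} (hg₁ : Measurable g₁)
    (g₂ : EuclideanSpace ℝ (Fin n) → ℝ≥0∞) (x : EuclideanSpace ℝ (Fin n)) :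
    maxFn n (g₁ + g₂) x ≤ maxFn n g₁ x + maxFn n g₂ x := by
  refine iSup₂_le fun r hr => ?_
  simp only [Pi.add_apply]
  rw [lintegral_add_left hg₁, ENNReal.add_div]
  exact add_le_add (le_maxFn g₁ x hr) (le_maxFn g₂ x hr)

theorem maxFn_le_of_le {g : EuclideanSpace ℝ (Fin n) → ℝ≥0∞} {c : ℝ≥0∞} (hg : ∀ y, g y ≤ c)
    (x : EuclideanSpace ℝ (Fin n)) : maxFn n g x ≤ c := by
  refine iSup₂_le fun r _ => ENNReal.div_le_of_le_mul ?_
  calc ∫⁻ y in ball x r, g y ≤ ∫⁻ _ in ball x r, c := lintegral_mono hg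
    _ = c * volume (ball x r) := setLIntegral_const _ _

theorem mul_volume_lt_maxFn_le (g : EuclideanSpace ℝ (Fin n) → ℝ≥0∞) (l : ℝ≥0∞) :
    l * volume {x | l < maxFn n g x} ≤ 4 ^ n * ∫⁻ y, g y := by
  have h4 : (4 : ℝ≥0∞) ^ n = 4 ^ finrank ℝ (EuclideanSpace ℝ (Fin n)) := by
    rw [finrank_euclideanSpace_fin]
  rw [h4]
  refine mul_measure_le_of_le_setLIntegral_ball fun x hx => ?_
  obtain ⟨r, hx⟩ := lt_iSup_iff.1 (show l < maxFn n g x from hx)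
  obtain ⟨hr, hx⟩ := lt_iSup_iff.1 hx
  refine ⟨r, hr, ?_⟩
  exact (ENNReal.le_div_iff_mul_le (Or.inl (measure_ball_pos volume x hr).ne')
    (Or.inl measure_ball_lt_top.ne)).1 hx.le

theorem setOf_two_mul_lt_maxFn_subset {g : EuclideanSpace ℝ (Fin n) → ℝ≥0∞} (hg : Measurable g)
    (c : ℝ≥0∞) :
    {x | 2 * c < maxFn n g x} ⊆ {x | c < maxFn n ({y | c < g y}.indicator g) x} := by
  set s := {y | c < g y}
  have hs : MeasurableSet s := measurableSet_lt measurable_const hg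
  have hlow (x) : maxFn n (sᶜ.indicator g) x ≤ c := maxFn_le_of_le (fun y => by
    by_cases hy : c < g y
    · simp [s, hy]
    · simpa [s, hy] using not_lt.1 hy) x
  intro x hx
  by_contra! hx'
  have := (maxFn_add_le (hg.indicator hs) _ x).trans (add_le_add (not_lt.1 hx') (hlow x))
  rw [indicator_self_add_compl, ← two_mul] at this
  exact (not_lt.2 this) hx

end Maximal

section Dyadic

theorem le_tsum_two_pow_mul_ite {c t : ℝ≥0∞} (hc : c ≠ 0) (hct : c < t) :
    t ≤ ∑' k : ℕ, if 2 ^ k * c < t then 2 ^ (k + 1) * c else 0 := by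
  have hc' : c ≠ ⊤ := hct.ne_top
  rcases eq_or_ne t ⊤ with rfl | ht
  · refine (ENNReal.tsum_const_eq_top_of_ne_zero hc).symm.le.trans
      (ENNReal.tsum_le_tsum fun k => ?_)
    rw [if_pos (ENNReal.mul_lt_top (ENNReal.pow_lt_top ofNat_lt_top) hc'.lt_top)]
    exact le_mul_of_one_le_left' (one_le_pow₀ one_le_two)
  have hex : ∃ k : ℕ, t ≤ 2 ^ (k + 1) * c := by
    obtain ⟨N, hN⟩ := ENNReal.exists_nat_gt (ENNReal.div_lt_top ht hc).ne
    refine ⟨N, ((ENNReal.div_lt_iff (Or.inl hc) (Or.inl hc')).1 hN).le.trans ?_⟩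
    gcongr
    exact_mod_cast Nat.lt_two_pow_self.le.trans (Nat.pow_le_pow_right two_pos N.le_succ)
  have hk : 2 ^ Nat.find hex * c < t := by
    rcases hk : Nat.find hex with _ | k
    · simpa using hct
    · exact not_le.1 (Nat.find_min hex (hk ▸ k.lt_succ_self))
  calc t ≤ 2 ^ (Nat.find hex + 1) * c := Nat.find_spec hex
    _ = if 2 ^ Nat.find hex * c < t then 2 ^ (Nat.find hex + 1) * c else 0 := (if_pos hk).symm
    _ ≤ ∑' k : ℕ, if 2 ^ k * c < t then 2 ^ (k + 1) * c else 0 := ENNReal.le_tsum (Nat.find hex)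

theorem lintegral_indicator_lt_le_tsum {α : Type*} [MeasurableSpace α] (μ : Measure α)
    {g : α → ℝ≥0∞} (hg : Measurable g) {c : ℝ≥0∞} (hc : c ≠ 0) :
    ∫⁻ x, {x | c < g x}.indicator g x ∂μ ≤
      ∑' k : ℕ, 2 ^ (k + 1) * c * μ {x | 2 ^ k * c < g x} := by
  have hmeas (k : ℕ) : MeasurableSet {x | 2 ^ k * c < g x} := measurableSet_lt measurable_const hg
  calc ∫⁻ x, {x | c < g x}.indicator g x ∂μ
      ≤ ∫⁻ x, ∑' k : ℕ, {x | 2 ^ k * c < g x}.indicator (fun _ => 2 ^ (k + 1) * c) x ∂μ := by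
        refine lintegral_mono fun x => ?_
        by_cases hx : c < g x
        · simpa [hx, indicator_apply] using le_tsum_two_pow_mul_ite hc hx
        · simp [hx]
    _ = ∑' k : ℕ, 2 ^ (k + 1) * c * μ {x | 2 ^ k * c < g x} := by
        rw [lintegral_tsum fun k => (measurable_const.indicator (hmeas k)).aemeasurable]
        simp_rw [lintegral_indicator_const (hmeas _)]

theorem two_pow_succ_mul_inv_rpow (p : ℝ) (k : ℕ) :
    (2 : ℝ≥0∞) ^ (k + 1) * ((2 ^ k) ^ p)⁻¹ = 2 * (2 ^ (1 - p)) ^ k := by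
  simp_rw [← ENNReal.rpow_natCast, ← ENNReal.rpow_mul, ← ENNReal.rpow_neg]
  rw [← ENNReal.rpow_add _ _ two_ne_zero ofNat_ne_top]
  nth_rw 2 [← ENNReal.rpow_one 2]
  rw [← ENNReal.rpow_add _ _ two_ne_zero ofNat_ne_top]
  congr 1
  push_cast
  ring

theorem tsum_two_pow_succ_mul_div_rpow (hp : 0 ≤ p) (c A : ℝ≥0∞) :
    ∑' k : ℕ, 2 ^ (k + 1) * c * (A / (2 ^ k * c)) ^ p =
      2 * c * (A / c) ^ p * (1 - 2 ^ (1 - p))⁻¹ := by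
  have hterm (k : ℕ) : 2 ^ (k + 1) * c * (A / (2 ^ k * c)) ^ p =
      2 * c * (A / c) ^ p * (2 ^ (1 - p)) ^ k := by
    have hdiv : A / (2 ^ k * c) = A / c * (2 ^ k)⁻¹ := by
      rw [div_eq_mul_inv, div_eq_mul_inv, ENNReal.mul_inv (Or.inl (by positivity))
        (Or.inl (ENNReal.pow_ne_top ofNat_ne_top))]
      ring
    rw [hdiv, ENNReal.mul_rpow_of_nonneg _ _ hp, ENNReal.inv_rpow,
      show (2 : ℝ≥0∞) * c * (A / c) ^ p * (2 ^ (1 - p)) ^ k =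
        2 * (2 ^ (1 - p)) ^ k * (c * (A / c) ^ p) by ring,
      ← two_pow_succ_mul_inv_rpow]
    ring
  simp_rw [hterm, ENNReal.tsum_mul_left, ENNReal.tsum_geometric]

end Dyadic

section WeakType

/-- `4 ^ n` is the Vitali enlargement factor, `(1 - 2 ^ (1 - p))⁻¹` the dyadic geometric series. -/
noncomputable def weakMaxConst (n : ℕ) (p : ℝ) : ℝ≥0∞ :=
  2 * (2 * 4 ^ n * (1 - 2 ^ (1 - p))⁻¹) ^ (1 / p)

theorem weakMaxConst_ne_top (hp : 1 < p) : weakMaxConst n p ≠ ⊤ := by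
  have hr : (2 : ℝ≥0∞) ^ (1 - p) < 1 :=
    ENNReal.rpow_lt_one_of_one_lt_of_neg one_lt_two (by linarith)
  refine ENNReal.mul_ne_top ofNat_ne_top (ENNReal.rpow_ne_top_of_nonneg (by positivity) ?_)
  exact ENNReal.mul_ne_top (ENNReal.mul_ne_top ofNat_ne_top (ENNReal.pow_ne_top ofNat_ne_top))
    (ENNReal.inv_ne_top.2 (tsub_pos_of_lt hr).ne')

theorem wLp_maxFn_le (hp : 0 < p) {g : EuclideanSpace ℝ (Fin n) → ℝ≥0∞} (hg : Measurable g) :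
    wLp n p (maxFn n g) ≤ weakMaxConst n p * wLp n p g := by
  set A := wLp n p g
  set B : ℝ≥0∞ := 2 * 4 ^ n * (1 - 2 ^ (1 - p))⁻¹
  refine wLp_le fun l hl => ?_
  set c : ℝ≥0∞ := l / 2
  have hc : c ≠ 0 := by simp [c, hl.ne']
  have hc' : c ≠ ⊤ := ENNReal.div_ne_top coe_ne_top two_ne_zero
  have hlc : (l : ℝ≥0∞) = 2 * c := (ENNReal.mul_div_cancel two_ne_zero ofNat_ne_top).symm
  set s := {y | c < g y}
  have hsub : {x | (l : ℝ≥0∞) < maxFn n g x} ⊆ {x | c < maxFn n (s.indicator g) x} :=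
    hlc ▸ setOf_two_mul_lt_maxFn_subset hg c
  have hvol : c * volume {x | (l : ℝ≥0∞) < maxFn n g x} ≤ c * (B * (A / c) ^ p) :=
    calc c * volume {x | (l : ℝ≥0∞) < maxFn n g x}
        ≤ c * volume {x | c < maxFn n (s.indicator g) x} := by gcongr
      _ ≤ 4 ^ n * ∫⁻ y, s.indicator g y := mul_volume_lt_maxFn_le _ _
      _ ≤ 4 ^ n * ∑' k : ℕ, 2 ^ (k + 1) * c * volume {x | 2 ^ k * c < g x} := by
          gcongr; exact lintegral_indicator_lt_le_tsum _ hg hc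
      _ ≤ 4 ^ n * ∑' k : ℕ, 2 ^ (k + 1) * c * (A / (2 ^ k * c)) ^ p := by
          gcongr with k
          exact volume_lt_le_wLp_div_rpow hp g (mul_ne_zero (by positivity) hc)
      _ = c * (B * (A / c) ^ p) := by
          rw [tsum_two_pow_succ_mul_div_rpow hp.le]
          ring
  calc (l : ℝ≥0∞) * volume {x | (l : ℝ≥0∞) < maxFn n g x} ^ (1 / p)
      ≤ 2 * c * (B * (A / c) ^ p) ^ (1 / p) := by
        rw [hlc] at hvol ⊢
        gcongr
        exact (ENNReal.mul_le_mul_iff_right hc hc').1 hvol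
    _ = 2 * B ^ (1 / p) * (c * (A / c)) := by
        rw [ENNReal.mul_rpow_of_nonneg _ _ (by positivity), ← ENNReal.rpow_mul,
          mul_one_div_cancel hp.ne', ENNReal.rpow_one]
        ring
    _ = weakMaxConst n p * A := by rw [ENNReal.mul_div_cancel hc hc', weakMaxConst]

theorem wLp_le_of_le_mul_maxFn_add (hp : 1 ≤ p) {f g₁ g₂ g₃ : EuclideanSpace ℝ (Fin n) → ℝ≥0∞}
    (hg₁ : Measurable g₁) (hg₂ : Measurable g₂) (hg₃ : Measurable g₃) (C : ℝ≥0)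
    (hf : ∀ x, f x ≤ C * (maxFn n g₁ x + maxFn n g₂ x + maxFn n g₃ x)) :
    wLp n p f ≤ 4 * C * weakMaxConst n p * (wLp n p g₁ + wLp n p g₂ + wLp n p g₃) := by
  have hp0 : 0 < p := by linarith
  have hsum : wLp n p (maxFn n g₁ + maxFn n g₂ + maxFn n g₃) ≤
      4 * (wLp n p (maxFn n g₁) + wLp n p (maxFn n g₂) + wLp n p (maxFn n g₃)) :=
    calc _ ≤ 2 * (2 * (wLp n p (maxFn n g₁) + wLp n p (maxFn n g₂)) + wLp n p (maxFn n g₃)) :=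
          (wLp_add_le hp _ _).trans (by gcongr; exact wLp_add_le hp _ _)
      _ ≤ _ := by
          rw [mul_add, ← mul_assoc, mul_add 4]
          gcongr <;> norm_num
  calc wLp n p f ≤ wLp n p (fun x => C * (maxFn n g₁ + maxFn n g₂ + maxFn n g₃) x) :=
        wLp_mono hp0.le hf
    _ ≤ C * (4 * (wLp n p (maxFn n g₁) + wLp n p (maxFn n g₂) + wLp n p (maxFn n g₃))) :=
        (wLp_const_mul_le hp0 C _).trans (by gcongr)
    _ ≤ C * (4 * (weakMaxConst n p * wLp n p g₁ + weakMaxConst n p * wLp n p g₂ +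
          weakMaxConst n p * wLp n p g₃)) := by
        gcongr <;> exact wLp_maxFn_le hp0 ‹_›
    _ = 4 * C * weakMaxConst n p * (wLp n p g₁ + wLp n p g₂ + wLp n p g₃) := by ring

end WeakType

section Sequences

theorem tsum_abs_sub_le_one (f : ℤ → ℝ≥0∞) (j : ℤ) :
    ∑' k : {k : ℤ // |j - k| ≤ 1}, f k = f (j - 1) + f j + f (j + 1) := by
  have hs (k : ℤ) : |j - k| ≤ 1 ↔ k ∈ ({j - 1, j, j + 1} : Finset ℤ) := by
    simp only [Finset.mem_insert, Finset.mem_singleton, abs_le]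
    omega
  refine ((Equiv.subtypeEquivRight hs).tsum_eq fun k => f k).trans ?_
  rw [Finset.tsum_subtype,
    Finset.sum_insert (by simp only [Finset.mem_insert, Finset.mem_singleton]; omega),
    Finset.sum_insert (by simp only [Finset.mem_singleton]; omega), Finset.sum_singleton, add_assoc]

theorem two_rpow_mul_le_of_abs_sub_le_one (α : ℝ) {j k : ℤ} (h : |j - k| ≤ 1) :
    (2 : ℝ≥0∞) ^ ((j : ℝ) * α) ≤ 2 ^ |α| * 2 ^ ((k : ℝ) * α) := by
  rw [← ENNReal.rpow_add _ _ two_ne_zero ofNat_ne_top]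
  refine ENNReal.rpow_le_rpow_of_exponent_le one_le_two ?_
  have h' : |(j : ℝ) - k| ≤ 1 := by exact_mod_cast h
  have := le_abs_self (((j : ℝ) - k) * α)
  rw [abs_mul] at this
  nlinarith [abs_nonneg α]

theorem tsum_rpow_add_shifts_le {q : ℝ} (hq : 1 ≤ q) (b : ℤ → ℝ≥0∞) :
    ∑' j, (b (j - 1) + b j + b (j + 1)) ^ q ≤ 3 ^ q * ∑' j, b j ^ q := by
  have h3 (j : ℤ) : (b (j - 1) + b j + b (j + 1)) ^ q ≤
      3 ^ (q - 1) * (b (j - 1) ^ q + b j ^ q + b (j + 1) ^ q) := by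
    simpa [Fin.sum_univ_three] using
      ENNReal.rpow_sum_le_const_mul_sum_rpow (s := Finset.univ)
        (f := ![b (j - 1), b j, b (j + 1)]) hq
  have hshift (i : ℤ) : ∑' j, b (j + i) ^ q = ∑' j, b j ^ q :=
    (Equiv.addRight i).tsum_eq fun j => b j ^ q
  calc ∑' j, (b (j - 1) + b j + b (j + 1)) ^ q
      ≤ ∑' j, 3 ^ (q - 1) * (b (j - 1) ^ q + b j ^ q + b (j + 1) ^ q) := ENNReal.tsum_le_tsum h3
    _ = 3 ^ (q - 1) * (∑' j, b (j + -1) ^ q + ∑' j, b (j + 0) ^ q + ∑' j, b (j + 1) ^ q) := by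
        rw [ENNReal.tsum_mul_left, ENNReal.tsum_add, ENNReal.tsum_add]
        simp [sub_eq_add_neg]
    _ = 3 ^ (q - 1) * 3 ^ (1 : ℝ) * ∑' j, b j ^ q := by
        rw [hshift, hshift, hshift, ENNReal.rpow_one]
        ring
    _ = 3 ^ q * ∑' j, b j ^ q := by
        rw [← ENNReal.rpow_add _ _ three_ne_zero ofNat_ne_top, sub_add_cancel]

theorem tsum_two_rpow_mul_rpow_le (α : ℝ) {q : ℝ} (hq : 1 ≤ q) {a b : ℤ → ℝ≥0∞} {K : ℝ≥0∞}
    (hab : ∀ j, a j ≤ K * (b (j - 1) + b j + b (j + 1))) :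
    ∑' j : ℤ, (2 ^ ((j : ℝ) * α) * a j) ^ q ≤
      (3 * 2 ^ |α| * K) ^ q * ∑' j : ℤ, (2 ^ ((j : ℝ) * α) * b j) ^ q := by
  set β : ℤ → ℝ≥0∞ := fun j => 2 ^ ((j : ℝ) * α) * b j
  have hq0 : 0 ≤ q := by linarith
  have hshift {j k : ℤ} (h : |j - k| ≤ 1) : 2 ^ ((j : ℝ) * α) * b k ≤ 2 ^ |α| * β k := by
    rw [← mul_assoc]
    gcongr
    exact two_rpow_mul_le_of_abs_sub_le_one α h
  have hw (j : ℤ) : 2 ^ ((j : ℝ) * α) * a j ≤ 2 ^ |α| * K * (β (j - 1) + β j + β (j + 1)) :=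
    calc 2 ^ ((j : ℝ) * α) * a j
        ≤ K * (2 ^ ((j : ℝ) * α) * b (j - 1) + 2 ^ ((j : ℝ) * α) * b j +
            2 ^ ((j : ℝ) * α) * b (j + 1)) := by
          rw [← mul_add, ← mul_add, mul_left_comm]
          gcongr
          exact hab j
      _ ≤ K * (2 ^ |α| * β (j - 1) + 2 ^ |α| * β j + 2 ^ |α| * β (j + 1)) := by
          gcongr K * (?_ + ?_ + ?_) <;> refine hshift ?_ <;> rw [abs_le] <;> omega
      _ = 2 ^ |α| * K * (β (j - 1) + β j + β (j + 1)) := by ring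
  calc ∑' j : ℤ, (2 ^ ((j : ℝ) * α) * a j) ^ q
      ≤ ∑' j : ℤ, (2 ^ |α| * K) ^ q * (β (j - 1) + β j + β (j + 1)) ^ q :=
        ENNReal.tsum_le_tsum fun j =>
          (ENNReal.rpow_le_rpow (hw j) hq0).trans_eq (ENNReal.mul_rpow_of_nonneg _ _ hq0)
    _ ≤ (2 ^ |α| * K) ^ q * (3 ^ q * ∑' j, β j ^ q) := by
        rw [ENNReal.tsum_mul_left]
        gcongr
        exact tsum_rpow_add_shifts_le hq β
    _ = (3 * 2 ^ |α| * K) ^ q * ∑' j, β j ^ q := by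
        rw [mul_assoc 3, ENNReal.mul_rpow_of_nonneg 3 _ hq0]
        ring

theorem iSup_tsum_lt_two_rpow_mul_rpow_le {m q : ℝ} (hm : 0 ≤ m) (hq : 0 ≤ q) (f : ℤ → ℝ≥0∞) :
    ⨆ t : ℤ, ∑' j : {j : ℤ // j < t}, (2 ^ (2 * ((j : ℝ) - t) * m) * f j) ^ q ≤
      ∑' j, f j ^ q := by
  refine iSup_le fun t => ?_
  calc ∑' j : {j : ℤ // j < t}, (2 ^ (2 * ((j : ℝ) - t) * m) * f j) ^ q
      ≤ ∑' j : {j : ℤ // j < t}, f j ^ q := ENNReal.tsum_le_tsum fun j => by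
        have hj : ((j : ℤ) : ℝ) < t := by exact_mod_cast j.2
        gcongr
        refine mul_le_of_le_one_left' ?_
        simpa using ENNReal.rpow_le_rpow_of_exponent_le one_le_two
          (by nlinarith : 2 * (((j : ℤ) : ℝ) - t) * m ≤ 0)
    _ ≤ ∑' j, f j ^ q := ENNReal.tsum_comp_le_tsum_of_injective Subtype.val_injective _

end Sequences

theorem low_frequency_estimate_general (n : ℕ) (p q m' : ℝ)
    (hp : 1 < p) (hq : 1 ≤ q) (hm' : 0 ≤ m') (C₀ : NNReal)
    (F G : ℤ → EuclideanSpace ℝ (Fin n) → ℝ≥0∞)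
    (hG : ∀ j, Measurable (G j))
    (hFG : ∀ (j : ℤ) (x : EuclideanSpace ℝ (Fin n)),
      F j x ≤ (C₀ : ℝ≥0∞) * ∑' j' : {j' : ℤ // |j - j'| ≤ 1}, maxFn n (G j'.1) x) :
    ∃ C : NNReal, 0 < C ∧
      (⨆ jt : ℤ, ∑' j : {j : ℤ // j < jt},
          ((2 : ℝ≥0∞) ^ (2 * ((j.1 : ℝ) - (jt : ℝ)) * m') *
            (2 : ℝ≥0∞) ^ ((j.1 : ℝ) * ((n : ℝ) / p - 1)) * wLp n p (F j.1)) ^ q)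
        ≤ (C : ℝ≥0∞) *
          ∑' j' : ℤ, ((2 : ℝ≥0∞) ^ ((j' : ℝ) * ((n : ℝ) / p - 1)) * wLp n p (G j')) ^ q := by
  set α : ℝ := (n : ℝ) / p - 1
  set K : ℝ≥0∞ := 3 * 2 ^ |α| * (4 * C₀ * weakMaxConst n p)
  have hK : K ^ q ≠ ⊤ := ENNReal.rpow_ne_top_of_nonneg (by linarith) <|
    ENNReal.mul_ne_top (ENNReal.mul_ne_top ofNat_ne_top
      (ENNReal.rpow_ne_top_of_nonneg (abs_nonneg α) ofNat_ne_top))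
      (ENNReal.mul_ne_top (ENNReal.mul_ne_top ofNat_ne_top coe_ne_top) (weakMaxConst_ne_top hp))
  have hF (j : ℤ) : wLp n p (F j) ≤
      4 * C₀ * weakMaxConst n p * (wLp n p (G (j - 1)) + wLp n p (G j) + wLp n p (G (j + 1))) :=
    wLp_le_of_le_mul_maxFn_add hp.le (hG _) (hG _) (hG _) C₀ fun x =>
      (hFG j x).trans_eq (by rw [tsum_abs_sub_le_one (fun k => maxFn n (G k) x) j])
  refine ⟨(K ^ q).toNNReal + 1, by positivity, ?_⟩
  calc _ ≤ ∑' j : ℤ, (2 ^ ((j : ℝ) * α) * wLp n p (F j)) ^ q := by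
        simpa only [mul_assoc] using iSup_tsum_lt_two_rpow_mul_rpow_le hm' (by linarith)
          fun j => 2 ^ ((j : ℝ) * α) * wLp n p (F j)
    _ ≤ K ^ q * ∑' j : ℤ, (2 ^ ((j : ℝ) * α) * wLp n p (G j)) ^ q :=
        tsum_two_rpow_mul_rpow_le α hq hF
    _ ≤ _ := by
        gcongr
        rw [ENNReal.coe_add, ENNReal.coe_toNNReal hK]
        exact le_self_add

/-- Section 3.3 (low-frequency estimate, core of Theorem 1.1): if
`F_j ≤ C₀ ∑_{|j-j'|≤1} M G_{j'}` pointwise, then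
`sup_{j_t} ∑_{j<j_t} (2^{2(j-j_t)m'} 2^{j(n/p-1)} ‖F_j‖_{L^{p,∞}})^q
  ≤ C ∑_{j'} (2^{j'(n/p-1)} ‖G_{j'}‖_{L^{p,∞}})^q`. -/
theorem low_frequency_estimate (n : ℕ) (hn : 1 ≤ n) (p q m' : ℝ)
    (hp : 1 < p) (hq : 1 ≤ q) (hm' : 0 ≤ m') (C₀ : NNReal) (hC₀ : 0 < C₀)
    (F G : ℤ → EuclideanSpace ℝ (Fin n) → ℝ≥0∞)
    (hF : ∀ j, Measurable (F j)) (hG : ∀ j, Measurable (G j))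
    (hFG : ∀ (j : ℤ) (x : EuclideanSpace ℝ (Fin n)),
      F j x ≤ (C₀ : ℝ≥0∞) * ∑' j' : {j' : ℤ // |j - j'| ≤ 1}, maxFn n (G j'.1) x) :
    ∃ C : NNReal, 0 < C ∧
      (⨆ jt : ℤ, ∑' j : {j : ℤ // j < jt},
          ((2 : ℝ≥0∞) ^ (2 * ((j.1 : ℝ) - (jt : ℝ)) * m') *
            (2 : ℝ≥0∞) ^ ((j.1 : ℝ) * ((n : ℝ) / p - 1)) * wLp n p (F j.1)) ^ q)
        ≤ (C : ℝ≥0∞) *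
          ∑' j' : ℤ, ((2 : ℝ≥0∞) ^ ((j' : ℝ) * ((n : ℝ) / p - 1)) * wLp n p (G j')) ^ q :=
  low_frequency_estimate_general n p q m' hp hq hm' C₀ F G hG hFG
end
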